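/- arXiv:2310.06314 — 3 statements merged into one kernel-verified Lean document; each statement's English description precedes it below -/
import Mathlib

section
/- For n ≥ 1, the large Schröder polynomials satisfy the recurrence (n+2)·S_{n+1}(z) = (2n+1)(1+2z)·S_n(z) − (n−1)·S_{n-1}(z). -/
open Finset

/-- Large Schröder polynomial `S_n(z)`. -/
noncomputable def schroederS (n : ℕ) (z : ℚ) : ℚ :=
  ∑ k ∈ Finset.range (n + 1),
    (n.choose k : ℚ) * ((n + k).choose k : ℚ) * z ^ k / (k + 1)

/-- Little Schröder polynomial `s_n(z)`. -/
noncomputable def schroederLittle (n : ℕ) (z : ℚ) : ℚ :=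
  ∑ k ∈ Finset.Icc 1 n,
    (1 / (n : ℚ)) * (n.choose k : ℚ) * (n.choose (k - 1) : ℚ) * z ^ (k - 1) * (z + 1) ^ (n - k)

/-- Central Delannoy polynomial `D_n(z)`. -/
noncomputable def delannoy (n : ℕ) (z : ℚ) : ℚ :=
  ∑ k ∈ Finset.range (n + 1), (n.choose k : ℚ) * ((n + k).choose k : ℚ) * z ^ k

/-!
Write `S_n = ∑ c(n,k) z^k` with `c(n,k) = C(n,k) C(n+k,k) / (k+1)`. From the binomial
contiguity relations, `c` satisfies a first-order relation in `n` and a diagonal one in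
`(n, k)`; after multiplying through by `(n+k+1)(n+k+2)` they express `c(n,k)`, `c(n,k-1)` and
`c(n-1,k)` as multiples of `c(n+1,k)`, and the recurrence for the coefficient of `z^k` becomes
a polynomial identity in `n` and `k`.
-/

open Polynomial

noncomputable def schroederCoeff (n k : ℕ) : ℚ := n.choose k * (n + k).choose k / (k + 1)

lemma schroederCoeff_of_lt {n k : ℕ} (h : n < k) : schroederCoeff n k = 0 := by
  simp [schroederCoeff, Nat.choose_eq_zero_of_lt h]

lemma schroederCoeff_zero_right (n : ℕ) : schroederCoeff n 0 = 1 := by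
  simp [schroederCoeff]

lemma add_one_mul_schroederCoeff (n k : ℕ) :
    ((k : ℚ) + 1) * schroederCoeff n k = n.choose k * (n + k).choose k := by
  rw [schroederCoeff]
  field_simp

lemma choose_add_add_one_mul (n k : ℕ) :
    (n + k + 1).choose k * (n + 1) = (n + k).choose k * (n + k + 1) := by
  have h := Nat.choose_mul_succ_eq (n + k) k
  rwa [show n + k + 1 - k = n + 1 by omega, eq_comm] at h

lemma schroederCoeff_succ_left (n k : ℕ) :
    ((n : ℚ) + 1 - k) * schroederCoeff (n + 1) k = (n + k + 1) * schroederCoeff n k := by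
  rcases lt_or_ge (n + 1) k with h | h
  · rw [schroederCoeff_of_lt h, schroederCoeff_of_lt (by omega)]
    ring
  have hc := add_one_mul_schroederCoeff n k
  have hc_succ := add_one_mul_schroederCoeff (n + 1) k
  have top : ((n + 1).choose k : ℚ) * ((n : ℚ) + 1 - k) = n.choose k * (n + 1) := by
    exact_mod_cast (Nat.choose_mul_succ_eq n k).symm
  have bottom : ((n + k + 1).choose k : ℚ) * (n + 1) = (n + k).choose k * (n + k + 1) := by
    exact_mod_cast choose_add_add_one_mul n k
  rw [show n + 1 + k = n + k + 1 by ring] at hc_succ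
  refine mul_left_cancel₀ (by positivity : ((n : ℚ) + 1) * (k + 1) ≠ 0) ?_
  linear_combination ((n : ℚ) + 1) * ((n : ℚ) + 1 - k) * hc_succ - (n + 1) * (n + k + 1) * hc
    + ((n : ℚ) + 1) * ((n + k + 1).choose k : ℚ) * top + (n.choose k : ℚ) * (n + 1) * bottom

lemma schroederCoeff_succ_succ (n k : ℕ) :
    ((k : ℚ) + 1) * (k + 2) * schroederCoeff (n + 1) (k + 1)
      = (n + k + 1) * (n + k + 2) * schroederCoeff n k := by
  have hc := add_one_mul_schroederCoeff n k
  have hc_succ := add_one_mul_schroederCoeff (n + 1) (k + 1)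
  have top : ((n : ℚ) + 1) * n.choose k = (n + 1).choose (k + 1) * (k + 1) := by
    exact_mod_cast Nat.add_one_mul_choose_eq n k
  have middle :
      ((n : ℚ) + k + 2) * (n + k + 1).choose k = (n + k + 2).choose (k + 1) * (k + 1) := by
    exact_mod_cast Nat.add_one_mul_choose_eq (n + k + 1) k
  have bottom : ((n + k + 1).choose k : ℚ) * (n + 1) = (n + k).choose k * (n + k + 1) := by
    exact_mod_cast choose_add_add_one_mul n k
  rw [show n + 1 + (k + 1) = n + k + 2 by ring] at hc_succ
  push_cast at hc_succ
  refine mul_left_cancel₀ (by positivity : ((k : ℚ) + 1) ≠ 0) ?_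
  linear_combination ((k : ℚ) + 1) ^ 2 * hc_succ - (n + k + 1) * (n + k + 2) * hc
    - ((k : ℚ) + 1) * ((n + k + 2).choose (k + 1) : ℚ) * top
    - ((n : ℚ) + 1) * (n.choose k : ℚ) * middle + ((n : ℚ) + k + 2) * (n.choose k : ℚ) * bottom

lemma schroederCoeff_recurrence (n k : ℕ) :
    ((n : ℚ) + 3) * schroederCoeff (n + 2) (k + 1)
      = (2 * n + 3) * (schroederCoeff (n + 1) (k + 1) + 2 * schroederCoeff (n + 1) k)
        - n * schroederCoeff n (k + 1) := by
  have e1 := schroederCoeff_succ_left (n + 1) (k + 1)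
  have e2 := schroederCoeff_succ_left n (k + 1)
  have e3 := schroederCoeff_succ_succ (n + 1) k
  push_cast at e1 e2 e3
  refine mul_left_cancel₀ (by positivity : ((n : ℚ) + k + 2) * (n + k + 3) ≠ 0) ?_
  linear_combination 2 * (2 * (n : ℚ) + 3) * e3 - n * (n + k + 3) * e2
    + ((2 * n + 3) * (n + k + 2) - n * (n - k)) * e1

noncomputable def schroederPoly (n : ℕ) : ℚ[X] :=
  ∑ k ∈ range (n + 1), monomial k (schroederCoeff n k)

lemma coeff_schroederPoly (n k : ℕ) : (schroederPoly n).coeff k = schroederCoeff n k := by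
  simp only [schroederPoly, finsetSum_coeff, coeff_monomial, sum_ite_eq', mem_range]
  split_ifs with h
  · rfl
  · exact (schroederCoeff_of_lt (by omega)).symm

lemma eval_schroederPoly (n : ℕ) (z : ℚ) : (schroederPoly n).eval z = schroederS n z := by
  simp only [schroederPoly, eval_finsetSum, eval_monomial, schroederS, schroederCoeff]
  exact sum_congr rfl fun k _ => by ring

lemma schroederPoly_recurrence (n : ℕ) :
    C ((n : ℚ) + 3) * schroederPoly (n + 2)
      = C (2 * (n : ℚ) + 3) * (1 + 2 * X) * schroederPoly (n + 1)
        - C (n : ℚ) * schroederPoly n := by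
  ext (_ | k)
  · simp only [map_add, map_natCast, add_mul, coeff_add, mul_coeff_zero, coeff_natCast_ite,
      reduceIte, coeff_schroederPoly, schroederCoeff_zero_right, mul_one, coeff_C_zero, map_mul,
      mul_add, coeff_sub, coeff_ofNat_mul, coeff_X_zero, mul_zero, add_zero]
    ring
  · simp only [map_add, map_natCast, add_mul, coeff_add, coeff_natCast_mul, coeff_schroederPoly,
      coeff_C_mul, map_mul, mul_add, mul_one, mul_assoc, coeff_sub, coeff_ofNat_mul, coeff_X_mul]
    linear_combination schroederCoeff_recurrence n k

theorem schroederS_recurrence_general (n : ℕ) (z : ℚ) :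
    ((n : ℚ) + 2) * schroederS (n + 1) z =
      (2 * (n : ℚ) + 1) * (1 + 2 * z) * schroederS n z - ((n : ℚ) - 1) * schroederS (n - 1) z := by
  rcases n with _ | n
  · -- `n - 1` truncates to `0` here
    simp [schroederS, sum_range_succ]
    ring
  · have h := congrArg (eval z) (schroederPoly_recurrence n)
    simp only [eval_mul, eval_sub, eval_C, eval_add, eval_one, eval_X, eval_ofNat,
      eval_schroederPoly] at h
    push_cast
    linear_combination h

theorem schroederS_recurrence (n : ℕ) (hn : 1 ≤ n) (z : ℚ) :
    ((n : ℚ) + 2) * schroederS (n + 1) z =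
      (2 * (n : ℚ) + 1) * (1 + 2 * z) * schroederS n z - ((n : ℚ) - 1) * schroederS (n - 1) z :=
  schroederS_recurrence_general n z
end

section
/- For any odd prime p, any nonnegative integer r, and any ε ∈ {−1,1}, Σ_{k=0}^{p-1} (2k+1)^{2r+1}·ε^k·s_k ≡ 0 (mod p), where s_k is the k-th little Schröder number. -/
/-!
Expanding `2^(n-k) = ∑_j C(n-k, j)` in the Narayana form of `s_n` and applying Vandermonde's
identity gives `n (n + 1) s_n = ∑_l l C(n, l) C(n + l, l)`. Modulo `p` one has
`C(p - 1 - a, j) ≡ (-1)^j C(a + j, j)`, which makes this sum, like `n (n + 1)`, invariant under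
`n ↦ p - 1 - n`; hence `s_{p-1-n} ≡ s_n` for `0 < n < p - 1`, while Fermat gives
`s_{p-1} ≡ 2^(p-1) - 1 ≡ 0 = s_0`. Under `k ↦ p - 1 - k` the factor `(2k + 1)^(2r + 1)`
changes sign while `ε^k` and `s_k` are unchanged modulo `p`, so the sum is congruent to its own
negative.
-/

open Finset

noncomputable def littleSchroederNum (n : ℕ) : ℚ :=
  ∑ k ∈ Finset.Icc 1 n,
    (1 / (n : ℚ)) * (n.choose k : ℚ) * (n.choose (k - 1) : ℚ) * 2 ^ (n - k)

lemma pow_eq_pow_of_sq_eq_one {M : Type*} [Monoid M] {x : M} (hx : x ^ 2 = 1) {a b : ℕ}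
    (hab : a % 2 = b % 2) : x ^ a = x ^ b := by
  rw [← Nat.mod_add_div a 2, ← Nat.mod_add_div b 2, pow_add, pow_add, pow_mul, pow_mul, hx,
    one_pow, one_pow, hab]

lemma sum_range_eq_zero_of_reflect_eq_neg {R : Type*} [Ring R] [Nontrivial R] [NoZeroDivisors R]
    (hR : ringChar R ≠ 2) {n : ℕ} {f : ℕ → R} (h : ∀ k < n, f (n - 1 - k) = -f k) :
    ∑ k ∈ range n, f k = 0 := by
  rw [← Ring.eq_self_iff_eq_zero_of_char_ne_two hR, ← sum_neg_distrib]
  conv_rhs => rw [← sum_range_reflect]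
  exact sum_congr rfl fun k hk => (h k (mem_range.mp hk)).symm

lemma sum_Icc_pow_sub_eq_sum_range_pow {R : Type*} [Semiring R] (x : R) (n : ℕ) :
    ∑ k ∈ Icc 1 n, x ^ (n - k) = ∑ i ∈ range n, x ^ i := by
  rw [← Ico_add_one_right_eq_Icc, sum_Ico_eq_sum_range, Nat.add_sub_cancel,
    ← sum_range_reflect]
  exact sum_congr rfl fun i hi => by rw [mem_range] at hi; congr 1; omega

lemma sum_range_choose_mul_choose (n k : ℕ) :
    ∑ l ∈ range (n + 1), n.choose l * l.choose k = n.choose k * 2 ^ (n - k) := by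
  rcases lt_or_ge n k with hnk | hkn
  · rw [Nat.choose_eq_zero_of_lt hnk, zero_mul]
    exact sum_eq_zero fun l hl => by
      rw [Nat.choose_eq_zero_of_lt (n := l) (by simp at hl; omega), mul_zero]
  rw [← Nat.sum_range_choose, mul_sum, show n + 1 = k + (n - k + 1) by omega, sum_range_add,
    sum_eq_zero fun l hl => by rw [Nat.choose_eq_zero_of_lt (mem_range.mp hl), mul_zero], zero_add]
  refine sum_congr rfl fun j _ => ?_
  rw [Nat.choose_mul (Nat.le_add_right k j), Nat.add_sub_cancel_left]

lemma add_one_mul_choose_add_add_one (n l : ℕ) :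
    (n + 1) * (l + n).choose (n + 1) = l * (n + l).choose l := by
  have h := Nat.choose_succ_right_eq (l + n) n
  rw [Nat.add_sub_cancel, ← Nat.choose_symm_add, add_comm l n] at h
  rw [add_comm l n, mul_comm, h, mul_comm]

lemma natCast_ne_zero_of_lt {n p : ℕ} (h₀ : n ≠ 0) (hn : n < p) : (n : ZMod p) ≠ 0 := by
  rw [Ne, ZMod.natCast_eq_zero_iff]
  exact Nat.not_dvd_of_pos_of_lt (Nat.pos_of_ne_zero h₀) hn

lemma natCast_pred_sub {p k : ℕ} (hk : k < p) : ((p - 1 - k : ℕ) : ZMod p) = -(k + 1) := by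
  rw [show p - 1 - k = p - (k + 1) by omega, Nat.cast_sub (by omega)]
  simp

section ZModPrime

variable {p : ℕ} [Fact p.Prime]

lemma natCast_choose_pred_sub_of_add_lt {a j : ℕ} (h : a + j < p) :
    ((p - 1 - a).choose j : ZMod p) = (-1) ^ j * (a + j).choose j := by
  induction j with
  | zero => simp
  | succ j ih =>
    have h₁ := Nat.choose_succ_right_eq (p - 1 - a) j
    have h₂ := Nat.add_one_mul_choose_eq (a + j) j
    have hj : (j + 1 : ZMod p) ≠ 0 := by
      exact_mod_cast natCast_ne_zero_of_lt j.succ_ne_zero (by omega)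
    rw [show p - 1 - a - j = p - 1 - (a + j) by omega] at h₁
    apply_fun (Nat.cast : ℕ → ZMod p) at h₁ h₂
    rw [Nat.cast_mul, Nat.cast_mul, natCast_pred_sub (by omega), ih (by omega)] at h₁
    push_cast at h₁ h₂
    apply mul_right_cancel₀ hj
    rw [← add_assoc]
    linear_combination h₁ - (-1) ^ j * h₂

lemma natCast_choose_pred {j : ℕ} (hj : j < p) : ((p - 1).choose j : ZMod p) = (-1) ^ j := by
  simpa using natCast_choose_pred_sub_of_add_lt (p := p) (a := 0) (by omega)

lemma natCast_choose_pred_sub {a j : ℕ} (ha : a < p) (hj : j < p) :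
    ((p - 1 - a).choose j : ZMod p) = (-1) ^ j * (a + j).choose j := by
  rcases lt_or_ge (a + j) p with h | h
  · exact natCast_choose_pred_sub_of_add_lt h
  rw [Nat.choose_eq_zero_of_lt (by omega), (ZMod.natCast_eq_zero_iff _ _).mpr
    ((Fact.out : p.Prime).dvd_choose hj (by omega) h)]
  simp

lemma natCast_choose_mul_choose_add_reflect {n m l : ℕ} (h : n + m + 1 = p) (hl : l < p) :
    ((m.choose l * (m + l).choose l : ℕ) : ZMod p) = n.choose l * (n + l).choose l := by
  have hm := natCast_choose_pred_sub (p := p) (a := n) (by omega) hl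
  have hn := natCast_choose_pred_sub (p := p) (a := m) (by omega) hl
  rw [show p - 1 - n = m by omega] at hm
  rw [show p - 1 - m = n by omega] at hn
  push_cast
  rw [hm, hn]
  ring

lemma natCast_sum_mul_choose_mul_choose_add_reflect {n m : ℕ} (h : n + m + 1 = p) :
    ((∑ l ∈ range (m + 1), l * m.choose l * (m + l).choose l : ℕ) : ZMod p) =
      ((∑ l ∈ range (n + 1), l * n.choose l * (n + l).choose l : ℕ) : ZMod p) := by
  have extend : ∀ a < p, ∑ l ∈ range (a + 1), l * a.choose l * (a + l).choose l =
      ∑ l ∈ range p, l * a.choose l * (a + l).choose l := fun a ha =>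
    sum_subset (range_subset_range.mpr ha) fun l _ hl => by
      rw [Nat.choose_eq_zero_of_lt (by simp at hl; omega), mul_zero, zero_mul]
  rw [extend m (by omega), extend n (by omega), Nat.cast_sum, Nat.cast_sum]
  refine sum_congr rfl fun l hl => ?_
  rw [mul_assoc, mul_assoc, Nat.cast_mul l, Nat.cast_mul l,
    natCast_choose_mul_choose_add_reflect h (mem_range.mp hl), Nat.cast_mul]

end ZModPrime

-- The Narayana number `C(n, k) C(n, k - 1) / n`, written so as to be visibly an integer.
def narayana (n k : ℕ) : ℤ :=
  (n - 1).choose (k - 1) * n.choose k - (n - 1).choose k * n.choose (k - 1)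

lemma natCast_mul_narayana {n k : ℕ} (hk : 0 < k) (hkn : k ≤ n) :
    (n : ℤ) * narayana n k = n.choose k * n.choose (k - 1) := by
  obtain ⟨m, rfl⟩ : ∃ m, n = m + 1 := ⟨n - 1, by omega⟩
  obtain ⟨j, rfl⟩ : ∃ j, k = j + 1 := ⟨k - 1, by omega⟩
  have h₁ := Nat.add_one_mul_choose_eq m j
  have h₂ := Nat.choose_mul_succ_eq m (j + 1)
  have h₃ := Nat.choose_succ_right_eq (m + 1) j
  rw [show m + 1 - (j + 1) = m - j by omega] at h₂
  zify [show j ≤ m by omega, show j ≤ m + 1 by omega] at h₁ h₂ h₃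
  simp only [narayana, Nat.add_sub_cancel]
  push_cast
  linear_combination
    ((m + 1).choose (j + 1) : ℤ) * (h₁ + h₃) - ((m + 1).choose j : ℤ) * h₂

def littleSchroeder (n : ℕ) : ℤ :=
  ∑ k ∈ Icc 1 n, narayana n k * 2 ^ (n - k)

lemma natCast_mul_littleSchroeder (n : ℕ) :
    (n : ℤ) * littleSchroeder n =
      ((∑ k ∈ Icc 1 n, n.choose k * n.choose (k - 1) * 2 ^ (n - k) : ℕ) : ℤ) := by
  rw [littleSchroeder, mul_sum]
  push_cast
  refine sum_congr rfl fun k hk => ?_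
  rw [mem_Icc] at hk
  rw [← mul_assoc, natCast_mul_narayana hk.1 hk.2]

lemma littleSchroederNum_eq (n : ℕ) : littleSchroederNum n = littleSchroeder n := by
  rcases n.eq_zero_or_pos with rfl | hn
  · simp [littleSchroederNum, littleSchroeder]
  have h := congrArg (Int.cast : ℤ → ℚ) (natCast_mul_littleSchroeder n)
  push_cast at h
  apply mul_left_cancel₀ (by positivity : (n : ℚ) ≠ 0)
  rw [h, littleSchroederNum, mul_sum]
  exact sum_congr rfl fun k _ => by field_simp

lemma sum_Icc_choose_mul_choose_pred_eq_sum_antidiagonal (n : ℕ) :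
    ∑ k ∈ Icc 1 n, n.choose k * n.choose (k - 1) * 2 ^ (n - k) =
      ∑ x ∈ antidiagonal (n + 1), n.choose x.1 * n.choose x.2 * 2 ^ (n - x.1) := by
  rw [Nat.sum_antidiagonal_eq_sum_range_succ (fun a b => n.choose a * n.choose b * 2 ^ (n - a)),
    sum_range_succ, sum_range_succ', ← Ico_add_one_right_eq_Icc, sum_Ico_eq_sum_range]
  simp only [Nat.choose_succ_self, mul_zero, zero_mul, add_zero, Nat.sub_zero]
  refine sum_congr (by simp) fun i hi => ?_
  rw [mem_range] at hi
  rw [add_comm 1 i, Nat.add_sub_cancel,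
    Nat.choose_symm_of_eq_add (by omega : n = (n + 1 - (i + 1)) + i)]

lemma sum_antidiagonal_choose_mul_choose_mul_two_pow (n : ℕ) :
    ∑ x ∈ antidiagonal (n + 1), n.choose x.1 * n.choose x.2 * 2 ^ (n - x.1) =
      ∑ l ∈ range (n + 1), n.choose l * (l + n).choose (n + 1) := by
  simp_rw [Nat.add_choose_eq, mul_sum]
  rw [sum_comm]
  refine sum_congr rfl fun x _ => ?_
  rw [mul_right_comm, ← sum_range_choose_mul_choose, sum_mul]
  exact sum_congr rfl fun l _ => by ring

lemma natCast_mul_add_one_mul_littleSchroeder (n : ℕ) :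
    (n : ℤ) * (n + 1) * littleSchroeder n =
      ((∑ l ∈ range (n + 1), l * n.choose l * (n + l).choose l : ℕ) : ℤ) := by
  rw [mul_right_comm, natCast_mul_littleSchroeder,
    sum_Icc_choose_mul_choose_pred_eq_sum_antidiagonal,
    sum_antidiagonal_choose_mul_choose_mul_two_pow, mul_comm]
  push_cast
  rw [mul_sum]
  refine sum_congr rfl fun l _ => ?_
  have h := congrArg (Nat.cast : ℕ → ℤ) (add_one_mul_choose_add_add_one n l)
  push_cast at h
  linear_combination (n.choose l : ℤ) * h

section ZModPrime

variable {p : ℕ} [Fact p.Prime]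

lemma littleSchroeder_pred_sub_of_pos {n : ℕ} (hn : 0 < n) (hnp : n + 1 < p) :
    (littleSchroeder (p - 1 - n) : ZMod p) = littleSchroeder n := by
  have key (a : ℕ) : (a : ZMod p) * (a + 1) * littleSchroeder a =
      ((∑ l ∈ range (a + 1), l * a.choose l * (a + l).choose l : ℕ) : ZMod p) := by
    exact_mod_cast congrArg (Int.cast : ℤ → ZMod p) (natCast_mul_add_one_mul_littleSchroeder a)
  have hcoef : ((p - 1 - n : ℕ) : ZMod p) * ((p - 1 - n : ℕ) + 1) = n * (n + 1) := by
    rw [natCast_pred_sub (by omega)]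
    ring
  have hne : (n : ZMod p) * (n + 1) ≠ 0 :=
    mul_ne_zero (natCast_ne_zero_of_lt hn.ne' (by omega))
      (by exact_mod_cast natCast_ne_zero_of_lt n.succ_ne_zero hnp)
  apply mul_left_cancel₀ hne
  rw [key n, ← hcoef, key, natCast_sum_mul_choose_mul_choose_add_reflect (n := n) (by omega)]

lemma littleSchroeder_pred_eq_zero (hp : p ≠ 2) : (littleSchroeder (p - 1) : ZMod p) = 0 := by
  have hp₀ := (Fact.out : p.Prime).pos
  have h := congrArg (Int.cast : ℤ → ZMod p) (natCast_mul_littleSchroeder (p - 1))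
  have hterm : ∀ k ∈ Icc 1 (p - 1),
      (((p - 1).choose k * (p - 1).choose (k - 1) * 2 ^ (p - 1 - k) : ℕ) : ZMod p) =
        -2 ^ (p - 1 - k) := by
    intro k hk
    rw [mem_Icc] at hk
    obtain ⟨j, rfl⟩ : ∃ j, k = j + 1 := ⟨k - 1, by omega⟩
    push_cast
    rw [natCast_choose_pred (by omega), natCast_choose_pred (by omega)]
    have hsq : (-1 : ZMod p) ^ j * (-1) ^ j = 1 := by
      rw [← mul_pow, neg_one_mul, neg_neg, one_pow]
    linear_combination (-2 ^ (p - 1 - (j + 1)) : ZMod p) * hsq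
  have hpred : ((p - 1 : ℕ) : ZMod p) = -1 := by
    simpa using natCast_pred_sub (p := p) (k := 0) hp₀
  have htwo : (2 : ZMod p) ≠ 0 := by
    have := (Fact.out : p.Prime).two_le
    exact_mod_cast natCast_ne_zero_of_lt (n := 2) two_ne_zero (by omega)
  rw [Int.cast_mul, Int.cast_natCast, Int.cast_natCast, hpred, Nat.cast_sum, sum_congr rfl hterm,
    sum_neg_distrib, sum_Icc_pow_sub_eq_sum_range_pow] at h
  linear_combination -h + geom_sum_mul (2 : ZMod p) (p - 1) + ZMod.pow_card_sub_one_eq_one htwo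

lemma littleSchroeder_pred_sub (hp : p ≠ 2) {k : ℕ} (hk : k < p) :
    (littleSchroeder (p - 1 - k) : ZMod p) = littleSchroeder k := by
  have hzero : littleSchroeder 0 = 0 := rfl
  rcases Nat.eq_zero_or_pos k with rfl | hk₀
  · rw [Nat.sub_zero, littleSchroeder_pred_eq_zero hp, hzero, Int.cast_zero]
  rcases Nat.lt_or_ge (k + 1) p with hkp | hkp
  · exact littleSchroeder_pred_sub_of_pos hk₀ hkp
  rw [show k = p - 1 by omega, Nat.sub_self, littleSchroeder_pred_eq_zero hp, hzero, Int.cast_zero]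

end ZModPrime

theorem sum_odd_power_weight_littleSchroederNum_congr (p : ℕ) (hp : p.Prime) (hodd : Odd p)
    (r : ℕ) (ε : ℚ) (hε : ε = 1 ∨ ε = -1) :
    ∃ m : ℤ,
      (∑ k ∈ Finset.range p, (2 * (k : ℚ) + 1) ^ (2 * r + 1) * ε ^ k * littleSchroederNum k)
        = (p : ℚ) * m := by
  have := Fact.mk hp
  have hp2 : p ≠ 2 := by rintro rfl; exact absurd hodd (by decide)
  obtain ⟨e, rfl, he⟩ : ∃ e : ℤ, (e : ℚ) = ε ∧ e ^ 2 = 1 := by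
    rcases hε with rfl | rfl
    exacts [⟨1, by simp⟩, ⟨-1, by simp⟩]
  set g : ℕ → ℤ := fun k => (2 * k + 1) ^ (2 * r + 1) * e ^ k * littleSchroeder k
  have hdvd : (p : ℤ) ∣ ∑ k ∈ range p, g k := by
    rw [← ZMod.intCast_zmod_eq_zero_iff_dvd, Int.cast_sum]
    refine sum_range_eq_zero_of_reflect_eq_neg (by rwa [ZMod.ringChar_zmod_n]) fun k hk => ?_
    have hpar : (p - 1 - k) % 2 = k % 2 := by obtain ⟨t, rfl⟩ := hodd; omega
    simp only [g]
    push_cast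
    rw [littleSchroeder_pred_sub hp2 hk, natCast_pred_sub hk,
      pow_eq_pow_of_sq_eq_one (by exact_mod_cast congrArg (Int.cast : ℤ → ZMod p) he) hpar,
      show 2 * -((k : ZMod p) + 1) + 1 = -(2 * k + 1) by ring, Odd.neg_pow ⟨r, rfl⟩]
    ring
  obtain ⟨m, hm⟩ := hdvd
  refine ⟨m, ?_⟩
  simp only [littleSchroederNum_eq]
  exact_mod_cast hm
end

section
/- For any odd prime p and any integer z, 2z·Σ_{k=0}^{p-1}(2k+1)·ε^k·S_k(z) ≡ 2z (mod p) for each ε ∈ {−1,1}. -/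
open Finset

open Nat

/-! The coefficients `a(n, k) = C(n, k) C(n + k, k)` satisfy
`a(n + 1, k + 1) - a(n - 1, k + 1) = 2 (2n + 1) a(n, k) / (k + 1)`, that is,
`D_{n+1}(z) - D_{n-1}(z) = 2z (2n + 1) S_n(z)`. Weighted by `ε^n` with `ε² = 1` these differences
telescope to `2z Σ_{k ≤ n} (2k + 1) ε^k S_k(z) = ε^n D_{n+1}(z) + ε^(n+1) D_n(z) - 1 - ε`, which for
`n = p - 1` even is `D_p(z) + ε D_{p-1}(z) - 1 - ε`. Modulo `p` only the extreme terms of `D_p` and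
`D_{p-1}` survive: `D_p(z) ≡ 1 + C(2p, p) z^p ≡ 1 + 2z` by Lucas and Fermat, and `D_{p-1}(z) ≡ 1`. -/

theorem sq_mul_choose_mul_choose_add_two (m j : ℕ) :
    (j + 1) ^ 2 * ((m + 2).choose (j + 1) * (m + j + 3).choose (j + 1))
      = (m + j + 3) * (m + j + 2) * ((m + 1).choose j * (m + j + 1).choose j) := by
  have h := choose_mul_succ_eq (m + j + 1) j
  rw [show m + j + 1 + 1 - j = m + 2 by omega] at h
  calc (j + 1) ^ 2 * ((m + 2).choose (j + 1) * (m + j + 3).choose (j + 1))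
      = ((m + 2).choose (j + 1) * (j + 1)) * ((m + j + 3).choose (j + 1) * (j + 1)) := by ring
    _ = (m + 2) * (m + 1).choose j * ((m + j + 3) * (m + j + 2).choose j) := by
      rw [← add_one_mul_choose_eq, ← add_one_mul_choose_eq]
    _ = (m + j + 3) * (m + 1).choose j * ((m + j + 2).choose j * (m + 2)) := by ring
    _ = _ := by rw [← h]; ring

theorem sq_mul_choose_mul_choose (m j : ℕ) :
    (j + 1) ^ 2 * (m.choose (j + 1) * (m + j + 1).choose (j + 1))
      = (m + 1 - j) * (m - j) * ((m + 1).choose j * (m + j + 1).choose j) := by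
  have h := choose_succ_right_eq (m + j + 1) j
  rw [show m + j + 1 - j = m + 1 by omega] at h
  calc (j + 1) ^ 2 * (m.choose (j + 1) * (m + j + 1).choose (j + 1))
      = (m.choose (j + 1) * (j + 1)) * ((m + j + 1).choose (j + 1) * (j + 1)) := by ring
    _ = (m - j) * (m + j + 1).choose j * (m.choose j * (m + 1)) := by
      rw [choose_succ_right_eq, h]; ring
    _ = _ := by rw [choose_mul_succ_eq]; ring

theorem add_one_mul_choose_mul_choose_add_two (m j : ℕ) :
    (j + 1) * ((m + 2).choose (j + 1) * (m + j + 3).choose (j + 1))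
      = (j + 1) * (m.choose (j + 1) * (m + j + 1).choose (j + 1))
        + (4 * m + 6) * ((m + 1).choose j * (m + j + 1).choose j) := by
  have factors : (m + j + 3) * (m + j + 2) * ((m + 1).choose j * (m + j + 1).choose j)
      = (m + 1 - j) * (m - j) * ((m + 1).choose j * (m + j + 1).choose j)
        + (j + 1) * (4 * m + 6) * ((m + 1).choose j * (m + j + 1).choose j) := by
    -- the subtractions truncate for `j > m`; past `j = m + 1` only `(m + 1).choose j = 0` saves it
    rcases lt_trichotomy j (m + 1) with hj | rfl | hj
    · obtain ⟨d, rfl⟩ := exists_add_of_le (Nat.le_of_lt_succ hj)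
      rw [show j + d + 1 - j = d + 1 by omega, show j + d - j = d by omega]
      ring
    · rw [Nat.sub_self, zero_mul]; ring
    · simp [choose_eq_zero_of_lt hj]
  refine Nat.eq_of_mul_eq_mul_left (by omega : 0 < j + 1) ?_
  calc (j + 1) * ((j + 1) * ((m + 2).choose (j + 1) * (m + j + 3).choose (j + 1)))
      = (j + 1) ^ 2 * ((m + 2).choose (j + 1) * (m + j + 3).choose (j + 1)) := by ring
    _ = _ := by rw [sq_mul_choose_mul_choose_add_two, factors, ← sq_mul_choose_mul_choose]; ring

theorem delannoy_eq_sum_range_of_le {n N : ℕ} (h : n ≤ N) (z : ℚ) :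
    delannoy n z = ∑ k ∈ range (N + 1), (n.choose k : ℚ) * ((n + k).choose k : ℚ) * z ^ k := by
  refine sum_subset (range_subset_range.2 (by omega)) fun k _ hk => ?_
  simp [choose_eq_zero_of_lt (show n < k by simp at hk; omega)]

theorem delannoy_add_two_sub_delannoy (m : ℕ) (z : ℚ) :
    delannoy (m + 2) z - delannoy m z = 2 * z * (2 * m + 3) * schroederS (m + 1) z := by
  rw [delannoy_eq_sum_range_of_le (show m ≤ m + 2 by omega), delannoy, ← sum_sub_distrib,
    sum_range_succ', schroederS, mul_sum]
  simp only [choose_zero_right, pow_zero, sub_self, add_zero]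
  refine sum_congr rfl fun j _ => ?_
  have h : ((j + 1) * ((m + 2).choose (j + 1) * (m + j + 3).choose (j + 1)) : ℚ)
      = (j + 1) * (m.choose (j + 1) * (m + j + 1).choose (j + 1))
        + (4 * m + 6) * ((m + 1).choose j * (m + j + 1).choose j) := by
    exact_mod_cast add_one_mul_choose_mul_choose_add_two m j
  rw [show m + 2 + (j + 1) = m + j + 3 by omega, show m + (j + 1) = m + j + 1 by omega,
    show m + 1 + j = m + j + 1 by omega]
  field_simp
  linear_combination z ^ (j + 1) * h

theorem two_mul_mul_sum_schroederS {ε : ℚ} (hε : ε ^ 2 = 1) (z : ℚ) (n : ℕ) :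
    2 * z * ∑ k ∈ range (n + 1), (2 * (k : ℚ) + 1) * ε ^ k * schroederS k z
      = ε ^ n * delannoy (n + 1) z + ε ^ (n + 1) * delannoy n z - 1 - ε := by
  induction n with
  | zero => simp [schroederS, delannoy, sum_range_succ]; ring
  | succ n ih =>
    rw [sum_range_succ, mul_add, ih]
    push_cast
    linear_combination (-ε ^ (n + 1)) * delannoy_add_two_sub_delannoy n z
      - ε ^ n * delannoy (n + 1) z * hε

/-- `delannoy` over an arbitrary commutative semiring, so that it can be reduced modulo `p`. -/
def centralDelannoy {R : Type*} [CommSemiring R] (n : ℕ) (z : R) : R :=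
  ∑ k ∈ range (n + 1), (n.choose k : R) * ((n + k).choose k : R) * z ^ k

theorem map_centralDelannoy {R S : Type*} [CommSemiring R] [CommSemiring S] (f : R →+* S)
    (n : ℕ) (z : R) : f (centralDelannoy n z) = centralDelannoy n (f z) := by
  simp [centralDelannoy]

theorem delannoy_intCast (n : ℕ) (z : ℤ) : delannoy n z = centralDelannoy n z :=
  (map_centralDelannoy (Int.castRingHom ℚ) n z).symm

section CharP

variable {R : Type*} [CommSemiring R] {p : ℕ} [CharP R p]

theorem centralDelannoy_sub_one_of_charP (hp : p.Prime) (z : R) :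
    centralDelannoy (p - 1) z = 1 := by
  rw [centralDelannoy, sum_eq_single_of_mem 0 (by simp) fun k hk hk0 => ?_]
  · simp
  have : ((p - 1 + k).choose k : R) = 0 := (CharP.cast_eq_zero_iff R p _).2 <|
    hp.dvd_choose (by simp at hk; omega) (by have := hp.pos; omega) (by omega)
  rw [this, mul_zero, zero_mul]

theorem centralDelannoy_of_charP (hp : p.Prime) (z : R) :
    centralDelannoy p z = 1 + 2 * z ^ p := by
  have : Fact p.Prime := ⟨hp⟩
  have h2p : ((p + p).choose p : R) = 2 := by
    have lucas := Choose.choose_modEq_choose_mod_mul_choose_div_nat (n := p + p) (k := p) (p := p)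
    rw [Nat.add_mod_right, Nat.mod_self, Nat.add_div_right _ hp.pos, Nat.div_self hp.pos] at lucas
    exact_mod_cast CharP.natCast_eq_natCast' R p (by simpa using lucas)
  rw [centralDelannoy, sum_range_succ, sum_eq_single_of_mem 0 (by simp [hp.pos]) fun k hk hk0 => ?_]
  · simp [h2p]
  have : (p.choose k : R) = 0 :=
    (CharP.cast_eq_zero_iff R p _).2 (hp.dvd_choose_self hk0 (by simpa using hk))
  rw [this, zero_mul, zero_mul]

end CharP

theorem prime_dvd_centralDelannoy_sub {p : ℕ} (hp : p.Prime) (z : ℤ) :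
    (p : ℤ) ∣ centralDelannoy p z - (1 + 2 * z) := by
  have : Fact p.Prime := ⟨hp⟩
  rw [← ZMod.intCast_zmod_eq_zero_iff_dvd, Int.cast_sub, ← eq_intCast (Int.castRingHom _),
    map_centralDelannoy, centralDelannoy_of_charP hp, ZMod.pow_card]
  simp

theorem prime_dvd_centralDelannoy_pred_sub_one {p : ℕ} (hp : p.Prime) (z : ℤ) :
    (p : ℤ) ∣ centralDelannoy (p - 1) z - 1 := by
  rw [← ZMod.intCast_zmod_eq_zero_iff_dvd, Int.cast_sub, ← eq_intCast (Int.castRingHom _),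
    map_centralDelannoy, centralDelannoy_sub_one_of_charP hp]
  simp

theorem two_z_sum_congr (p : ℕ) (hp : p.Prime) (hodd : Odd p)
    (ε : ℚ) (hε : ε = 1 ∨ ε = -1) (z : ℤ) :
    ∃ m : ℤ,
      2 * (z : ℚ) * (∑ k ∈ Finset.range p, (2 * (k : ℚ) + 1) * ε ^ k * schroederS k (z : ℚ))
        - 2 * (z : ℚ) = (p : ℚ) * m := by
  obtain ⟨e, rfl, he⟩ : ∃ e : ℤ, ε = e ∧ (e : ℚ) ^ 2 = 1 := by
    rcases hε with rfl | rfl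
    exacts [⟨1, by norm_num, by norm_num⟩, ⟨-1, by norm_num, by norm_num⟩]
  obtain ⟨a, ha⟩ := prime_dvd_centralDelannoy_sub hp z
  obtain ⟨b, hb⟩ := prime_dvd_centralDelannoy_pred_sub_one hp z
  obtain ⟨q, rfl⟩ := hodd
  rw [Nat.add_sub_cancel, sub_eq_iff_eq_add] at hb
  rw [sub_eq_iff_eq_add] at ha
  refine ⟨a + e * b, ?_⟩
  rw [two_mul_mul_sum_schroederS he, delannoy_intCast, delannoy_intCast, ha,
    hb, pow_succ, pow_mul, he, one_pow]
  push_cast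
  ring
end
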